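/- arXiv:2602.19885 — 3 statements merged into one kernel-verified Lean document; each statement's English description precedes it below -/
import Mathlib

section
/- The solution set of the equation a'' + r a' + r' a = 0, viewed inside the solution space of a''' + 2R a' + R' a = 0 with R = r' − (1/2)r², is closed under the vector-field Lie bracket: if a, b solve a'' + r a' + r' a = 0 then c = a b' − a' b also solves c'' + r c' + r' c = 0. -/
/-!
The equation `a'' + r a' + r' a = 0` says `(a' + r a)' = 0`. For two solutions, the product
rule gives `(a b' - a' b)' = a b'' - a'' b`, and substituting the equation for `a''` and `b''`
leaves `-r (a b' - a' b)`. So the bracket even solves the first-order equation `c' + r c = 0`,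
and differentiating that once more gives the second-order one.
-/

variable {𝕜 : Type*} [NontriviallyNormedField 𝕜] {r a b c : 𝕜 → 𝕜} {x : 𝕜}

/-- The coefficient of `∂_λ` in the Lie bracket `[a ∂_λ, b ∂_λ]`. -/
noncomputable def wronskian (a b : 𝕜 → 𝕜) : 𝕜 → 𝕜 := fun t => a t * deriv b t - deriv a t * b t

theorem deriv_wronskian (ha : DifferentiableAt 𝕜 a x) (ha' : DifferentiableAt 𝕜 (deriv a) x)
    (hb : DifferentiableAt 𝕜 b x) (hb' : DifferentiableAt 𝕜 (deriv b) x) :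
    deriv (wronskian a b) x = a x * deriv (deriv b) x - deriv (deriv a) x * b x := by
  unfold wronskian
  rw [deriv_fun_sub (ha.fun_mul hb') (ha'.fun_mul hb), deriv_fun_mul ha hb',
    deriv_fun_mul ha' hb]
  ring

theorem deriv_wronskian_of_solutions (ha : DifferentiableAt 𝕜 a x)
    (ha' : DifferentiableAt 𝕜 (deriv a) x) (hb : DifferentiableAt 𝕜 b x)
    (hb' : DifferentiableAt 𝕜 (deriv b) x)
    (hA : deriv (deriv a) x + r x * deriv a x + deriv r x * a x = 0)
    (hB : deriv (deriv b) x + r x * deriv b x + deriv r x * b x = 0) :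
    deriv (wronskian a b) x = -(r x * wronskian a b x) := by
  rw [deriv_wronskian ha ha' hb hb']
  unfold wronskian
  linear_combination a x * hB - b x * hA

theorem deriv_deriv_add_of_deriv_eq_neg_mul (hr : DifferentiableAt 𝕜 r x)
    (hc : DifferentiableAt 𝕜 c x) (hc' : deriv c = fun t => -(r t * c t)) :
    deriv (deriv c) x + r x * deriv c x + deriv r x * c x = 0 := by
  have hcc : deriv (deriv c) x = -(deriv r x * c x + r x * deriv c x) := by
    rw [hc', deriv.fun_neg, deriv_fun_mul hr hc, hc']
  rw [hcc, hc']
  ring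

theorem second_order_closed_under_bracket_general (r a b : ℂ → ℂ)
    (hr : Differentiable ℂ r)
    (ha : Differentiable ℂ a) (ha' : Differentiable ℂ (deriv a))
    (hb : Differentiable ℂ b) (hb' : Differentiable ℂ (deriv b))
    (hA : ∀ x, deriv (deriv a) x + r x * deriv a x + deriv r x * a x = 0)
    (hB : ∀ x, deriv (deriv b) x + r x * deriv b x + deriv r x * b x = 0) :
    ∀ x, deriv (deriv (fun t => a t * deriv b t - deriv a t * b t)) x
        + r x * deriv (fun t => a t * deriv b t - deriv a t * b t) x
        + deriv r x * (a x * deriv b x - deriv a x * b x) = 0 := by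
  have hW : deriv (wronskian a b) = fun t => -(r t * wronskian a b t) := funext fun t =>
    deriv_wronskian_of_solutions (ha t) (ha' t) (hb t) (hb' t) (hA t) (hB t)
  have hW_diff : Differentiable ℂ (wronskian a b) := (ha.mul hb').sub (ha'.mul hb)
  exact fun x => deriv_deriv_add_of_deriv_eq_neg_mul (hr x) (hW_diff x) hW

/-- The solution set of `a'' + r a' + r' a = 0` is closed under the vector-field
Lie bracket: if `a`, `b` are solutions then `c = a b' - a' b` is a solution. -/
theorem second_order_closed_under_bracket (r a b : ℂ → ℂ)
    (hr : Differentiable ℂ r) (hr' : Differentiable ℂ (deriv r))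
    (ha : Differentiable ℂ a) (ha' : Differentiable ℂ (deriv a))
    (hb : Differentiable ℂ b) (hb' : Differentiable ℂ (deriv b))
    (hA : ∀ x, deriv (deriv a) x + r x * deriv a x + deriv r x * a x = 0)
    (hB : ∀ x, deriv (deriv b) x + r x * deriv b x + deriv r x * b x = 0) :
    ∀ x, deriv (deriv (fun t => a t * deriv b t - deriv a t * b t)) x
        + r x * deriv (fun t => a t * deriv b t - deriv a t * b t) x
        + deriv r x * (a x * deriv b x - deriv a x * b x) = 0 :=
  second_order_closed_under_bracket_general r a b hr ha ha' hb hb' hA hB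
end

section
/- The space of solutions of the third order equation a''' + 2R a' + R' a = 0 is closed under the vector field bracket: if a and b are solutions then a b' − a' b is also a solution. -/
/-- The solution space of `a''' + 2R a' + R' a = 0` is closed under the vector-field
bracket: if `a`, `b` are solutions then `a b' - a' b` is a solution. -/
theorem third_order_closed_under_bracket (R a b : ℂ → ℂ)
    (hR : Differentiable ℂ R) (hR' : Differentiable ℂ (deriv R))
    (ha : Differentiable ℂ a) (ha' : Differentiable ℂ (deriv a))
    (ha'' : Differentiable ℂ (deriv (deriv a)))
    (hb : Differentiable ℂ b) (hb' : Differentiable ℂ (deriv b))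
    (hb'' : Differentiable ℂ (deriv (deriv b)))
    (hA : ∀ x, deriv (deriv (deriv a)) x + 2 * R x * deriv a x + deriv R x * a x = 0)
    (hB : ∀ x, deriv (deriv (deriv b)) x + 2 * R x * deriv b x + deriv R x * b x = 0) :
    ∀ x, deriv (deriv (deriv (fun t => a t * deriv b t - deriv a t * b t))) x
        + 2 * R x * deriv (fun t => a t * deriv b t - deriv a t * b t) x
        + deriv R x * (a x * deriv b x - deriv a x * b x) = 0 := by
  have Ha : ∀ x, HasDerivAt a (deriv a x) x := fun x => ha.differentiableAt.hasDerivAt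
  have Ha' : ∀ x, HasDerivAt (deriv a) (deriv (deriv a) x) x :=
    fun x => ha'.differentiableAt.hasDerivAt
  have Ha'' : ∀ x, HasDerivAt (deriv (deriv a)) (deriv (deriv (deriv a)) x) x :=
    fun x => ha''.differentiableAt.hasDerivAt
  have Hb : ∀ x, HasDerivAt b (deriv b x) x := fun x => hb.differentiableAt.hasDerivAt
  have Hb' : ∀ x, HasDerivAt (deriv b) (deriv (deriv b) x) x :=
    fun x => hb'.differentiableAt.hasDerivAt
  have Hb'' : ∀ x, HasDerivAt (deriv (deriv b)) (deriv (deriv (deriv b)) x) x :=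
    fun x => hb''.differentiableAt.hasDerivAt
  have HR : ∀ x, HasDerivAt R (deriv R x) x := fun x => hR.differentiableAt.hasDerivAt
  have hc1 : deriv (fun t => a t * deriv b t - deriv a t * b t)
      = fun x => a x * deriv (deriv b) x - deriv (deriv a) x * b x := by
    funext x
    have h : HasDerivAt (fun t => a t * deriv b t - deriv a t * b t)
        (deriv a x * deriv b x + a x * deriv (deriv b) x
          - (deriv (deriv a) x * b x + deriv a x * deriv b x)) x :=
      ((Ha x).mul (Hb' x)).sub ((Ha' x).mul (Hb x))
    rw [h.deriv]; ring
  have hc2 : deriv (fun x => a x * deriv (deriv b) x - deriv (deriv a) x * b x)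
      = fun x => -(2 * R x) * (a x * deriv b x - deriv a x * b x)
          + (deriv a x * deriv (deriv b) x - deriv (deriv a) x * deriv b x) := by
    funext x
    have h : HasDerivAt (fun x => a x * deriv (deriv b) x - deriv (deriv a) x * b x)
        (deriv a x * deriv (deriv b) x + a x * deriv (deriv (deriv b)) x
          - (deriv (deriv (deriv a)) x * b x + deriv (deriv a) x * deriv b x)) x :=
      ((Ha x).mul (Hb'' x)).sub ((Ha'' x).mul (Hb x))
    rw [h.deriv]
    linear_combination a x * hB x - b x * hA x
  intro x
  rw [hc1, hc2]
  have h : HasDerivAt (fun x => -(2 * R x) * (a x * deriv b x - deriv a x * b x)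
      + (deriv a x * deriv (deriv b) x - deriv (deriv a) x * deriv b x))
      (-(2 * deriv R x) * (a x * deriv b x - deriv a x * b x)
        + -(2 * R x) * (deriv a x * deriv b x + a x * deriv (deriv b) x
          - (deriv (deriv a) x * b x + deriv a x * deriv b x))
        + (deriv (deriv a) x * deriv (deriv b) x + deriv a x * deriv (deriv (deriv b)) x
          - (deriv (deriv (deriv a)) x * deriv b x + deriv (deriv a) x * deriv (deriv b) x))) x :=
    ((((HR x).const_mul 2).neg.mul (((Ha x).mul (Hb' x)).sub ((Ha' x).mul (Hb x)))).add
      (((Ha' x).mul (Hb'' x)).sub ((Ha'' x).mul (Hb' x))))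
  rw [h.deriv]
  linear_combination deriv a x * hB x - deriv b x * hA x
end

section
/- For a vector field X = a(λ)∂_λ on ℂ, its action on the function I(λ, λ_ε, λ_εε, λ_εεε) = R(λ)λ_ε² + λ_εεε/λ_ε − (3/2)(λ_εε/λ_ε)² via the third-order prolongation X⁽³⁾ is given by X⁽³⁾I = (a''' + 2R a' + R' a)·λ_ε². -/
/-! The invariant is a rational function of the jet coordinates, so `X⁽³⁾I` is computed from
its four partial derivatives; after clearing the powers of `λ_ε` all terms involving
`λ_εε` and `λ_εεε` cancel. -/

/-- The differential invariant `I = R(λ)λ_ε² + λ_εεε/λ_ε − (3/2)(λ_εε/λ_ε)²` on the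
third order frame bundle of `ℂ`. -/
noncomputable def invariantI (R : ℂ → ℂ) (l le lee leee : ℂ) : ℂ :=
  R l * le ^ 2 + leee / le - (3 / 2) * (lee / le) ^ 2

section PartialDerivatives

variable {R : ℂ → ℂ} (l le lee leee : ℂ)

theorem hasDerivAt_invariantI_l (hR : DifferentiableAt ℂ R l) :
    HasDerivAt (fun t => invariantI R t le lee leee) (deriv R l * le ^ 2) l :=
  ((hR.hasDerivAt.mul_const (le ^ 2)).add_const (leee / le)).sub_const
    (3 / 2 * (lee / le) ^ 2)

theorem hasDerivAt_invariantI_le (hle : le ≠ 0) :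
    HasDerivAt (fun t => invariantI R l t lee leee)
      (2 * R l * le - leee / le ^ 2 + 3 * lee ^ 2 / le ^ 3) le := by
  have hfirst := ((hasDerivAt_pow 2 le).const_mul (R l)).add
    ((hasDerivAt_const le leee).div (hasDerivAt_id le) hle)
  have hlast := (((hasDerivAt_const le lee).div (hasDerivAt_id le) hle).pow 2).const_mul
    ((3 : ℂ) / 2)
  refine (hfirst.sub hlast).congr_deriv ?_
  simp only [id_eq, Pi.div_apply]
  push_cast
  field_simp
  ring

theorem hasDerivAt_invariantI_lee :
    HasDerivAt (fun t => invariantI R l le t leee) (-3 * lee / le ^ 2) lee := by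
  have hlast := (((hasDerivAt_id lee).div_const le).pow 2).const_mul ((3 : ℂ) / 2)
  refine ((hasDerivAt_const lee (R l * le ^ 2 + leee / le)).sub hlast).congr_deriv ?_
  simp only [id_eq]
  ring

theorem hasDerivAt_invariantI_leee :
    HasDerivAt (fun t => invariantI R l le lee t) (1 / le) leee := by
  unfold invariantI
  simpa using (((hasDerivAt_id leee).div_const le).const_add (R l * le ^ 2)).sub_const
    (3 / 2 * (lee / le) ^ 2)

end PartialDerivatives

theorem prolongation_action_on_invariant_general (R a : ℂ → ℂ)
    (hR : Differentiable ℂ R) :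
    ∀ l le lee leee : ℂ, le ≠ 0 →
      a l * deriv (fun t => invariantI R t le lee leee) l
      + (deriv a l * le) * deriv (fun t => invariantI R l t lee leee) le
      + (deriv (deriv a) l * le ^ 2 + deriv a l * lee)
          * deriv (fun t => invariantI R l le t leee) lee
      + (deriv (deriv (deriv a)) l * le ^ 3
          + 3 * deriv (deriv a) l * le * lee + deriv a l * leee)
          * deriv (fun t => invariantI R l le lee t) leee
      = (deriv (deriv (deriv a)) l + 2 * R l * deriv a l + deriv R l * a l) * le ^ 2 := by
  intro l le lee leee hle
  rw [(hasDerivAt_invariantI_l l le lee leee (hR l)).deriv,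
    (hasDerivAt_invariantI_le l le lee leee hle).deriv,
    (hasDerivAt_invariantI_lee l le lee leee).deriv,
    (hasDerivAt_invariantI_leee l le lee leee).deriv]
  field_simp
  ring

/-- The action of the third prolongation `X⁽³⁾` of `X = a(λ)∂_λ` on the invariant `I`
is `X⁽³⁾I = (a''' + 2R a' + R' a)·λ_ε²`. -/
theorem prolongation_action_on_invariant (R a : ℂ → ℂ)
    (hR : Differentiable ℂ R) (ha : Differentiable ℂ a)
    (ha' : Differentiable ℂ (deriv a)) (ha'' : Differentiable ℂ (deriv (deriv a))) :
    ∀ l le lee leee : ℂ, le ≠ 0 →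
      a l * deriv (fun t => invariantI R t le lee leee) l
      + (deriv a l * le) * deriv (fun t => invariantI R l t lee leee) le
      + (deriv (deriv a) l * le ^ 2 + deriv a l * lee)
          * deriv (fun t => invariantI R l le t leee) lee
      + (deriv (deriv (deriv a)) l * le ^ 3
          + 3 * deriv (deriv a) l * le * lee + deriv a l * leee)
          * deriv (fun t => invariantI R l le lee t) leee
      = (deriv (deriv (deriv a)) l + 2 * R l * deriv a l + deriv R l * a l) * le ^ 2 :=
  prolongation_action_on_invariant_general R a hR
end
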